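/- arXiv:1908.02801 — 2 statements merged into one kernel-verified Lean document; each statement's English description precedes it below -/
import Mathlib

section
/- Let p ≥ 5 be prime and define v ∈ ℂ^p by v(j) = p^{-1} · ∑_{t=0}^{p-1} exp(2πi(t³ + jt)/p) for j ∈ ZMod p (i.e., v is the unitary discrete Fourier transform of the Alltop sequence f(t) = p^{-1/2} exp(2πi t³/p)). Then ‖v‖₂ = 1 and G(v) is (0, 1/p)-biangular: |⟨v, T^k v⟩|² = 0 for every k ∈ {1,…,p-1}, and |⟨v, M^ℓ T^k v⟩|² = 1/p for every k ∈ {0,…,p-1} and ℓ ∈ {1,…,p-1}. That is, v generates a Gabor MUB in ℂ^p. -/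
open scoped ComplexConjugate

/-- The translation operator `T` on `ℂ^d = (ZMod d → ℂ)`: `(T v) j = v (j - 1)`. -/
noncomputable def gT (d : ℕ) : (ZMod d → ℂ) ≃ₗ[ℂ] (ZMod d → ℂ) :=
  LinearEquiv.funCongrLeft ℂ ℂ (Equiv.subRight (1 : ZMod d))

/-- The modulation operator `M` on `ℂ^d`: `(M v) j = ω ^ j * v j` with `ω = exp (2 π i / d)`. -/
noncomputable def gM (d : ℕ) : (ZMod d → ℂ) ≃ₗ[ℂ] (ZMod d → ℂ) :=
  LinearEquiv.piCongrRight fun j =>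
    LinearEquiv.smulOfNeZero ℂ ℂ (Complex.exp (2 * Real.pi * Complex.I / d) ^ j.val)
      (pow_ne_zero _ (Complex.exp_ne_zero _))

/-- The standard inner product on `ℂ^d`, conjugate-linear in the first argument. -/
noncomputable def inn {d : ℕ} [NeZero d] (u w : ZMod d → ℂ) : ℂ :=
  ∑ j : ZMod d, conj (u j) * w j

/-- The Gabor system `G(v) = {M^ℓ T^k v}` is `(α, β)`-biangular:
`|⟨v, T^k v⟩|² = α` for `k ∈ {1,…,d-1}` and `|⟨v, M^ℓ T^k v⟩|² = β` for
`k ∈ {0,…,d-1}`, `ℓ ∈ {1,…,d-1}`. -/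
def Biangular (d : ℕ) [NeZero d] (v : ZMod d → ℂ) (α β : ℝ) : Prop :=
  (∀ k : ℕ, 1 ≤ k → k ≤ d - 1 → ‖inn v ((gT d ^ k) v)‖ ^ 2 = α) ∧
  (∀ k ℓ : ℕ, k ≤ d - 1 → 1 ≤ ℓ → ℓ ≤ d - 1 →
    ‖inn v ((gM d ^ ℓ) ((gT d ^ k) v))‖ ^ 2 = β)

/-- `B_d`: the set of nonzero `v ∈ ℂ^d` whose Gabor system is biangular. -/
def Bset (d : ℕ) [NeZero d] : Set (ZMod d → ℂ) :=
  {v | v ≠ 0 ∧ ∃ α β : ℝ, Biangular d v α β}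

/-! With `ψ` the standard additive character of `ZMod d`, the DFT of `t ↦ ψ (g t)` exchanges
translations and modulations, which gives `⟨v, M^ℓ T^k v⟩ = d⁻¹ ∑ₛ ψ (g s - g (s + ℓ) - k s)`.
For `g t = t³` the phase is quadratic in `s` with leading coefficient `-3ℓ`. If `ℓ = 0` it is
linear, so the sum is `p` or `0` by orthogonality of characters; if `ℓ ≠ 0` it is a quadratic
Gauss sum, and substituting `x = y + u` in `|∑ₓ ψ (q x)|² = ∑ₓ,ᵧ ψ (q x - q y)` leaves a linear
character sum in `y`, which vanishes unless `u = 0`, so `|∑|² = p`. -/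

open Complex Finset ZMod

theorem sum_range_eq_sum_zmod {M : Type*} [AddCommMonoid M] (N : ℕ) [NeZero N]
    (f : ZMod N → M) : ∑ t ∈ range N, f t = ∑ x : ZMod N, f x :=
  sum_nbij' (fun t => (t : ZMod N)) val (fun _ _ => mem_univ _)
    (fun x _ => mem_range.mpr (val_lt x)) (fun _ ht => val_cast_of_lt (mem_range.mp ht))
    (fun x _ => natCast_zmod_val x) (fun _ _ => rfl)

theorem natCast_zmod_ne_zero {n m : ℕ} (hm0 : 0 < m) (hmn : m < n) : (m : ZMod n) ≠ 0 := by
  rw [Ne, natCast_eq_zero_iff]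
  exact fun h => absurd (Nat.le_of_dvd hm0 h) (by omega)

theorem stdAddChar_natCast {N : ℕ} [NeZero N] (n : ℕ) :
    stdAddChar (n : ZMod N) = exp (2 * Real.pi * I * n / N) := by
  simpa using stdAddChar_coe (N := N) n

theorem sum_range_exp_cube_eq_sum_stdAddChar (p : ℕ) [NeZero p] (j : ZMod p) :
    ∑ t ∈ range p, exp (2 * Real.pi * I * ((t : ℂ) ^ 3 + (j.val : ℂ) * t) / p) =
      ∑ t : ZMod p, stdAddChar (t ^ 3 + j * t) := by
  rw [← sum_range_eq_sum_zmod]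
  refine sum_congr rfl fun t _ => ?_
  rw [show (t : ZMod p) ^ 3 + j * t = ((t ^ 3 + j.val * t : ℕ) : ZMod p) by
    push_cast [natCast_zmod_val]; rfl, stdAddChar_natCast]
  push_cast
  ring_nf

theorem gT_pow_apply (d k : ℕ) (w : ZMod d → ℂ) (j : ZMod d) : (gT d ^ k) w j = w (j - k) := by
  induction k generalizing w with
  | zero => simp
  | succ k ih =>
    rw [pow_succ, LinearEquiv.mul_apply, ih]
    simp [gT, sub_sub]

theorem gM_apply {d : ℕ} [NeZero d] (w : ZMod d → ℂ) (j : ZMod d) :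
    gM d w j = stdAddChar j * w j := by
  change exp (2 * Real.pi * I / d) ^ j.val * w j = _
  conv_rhs => arg 1; rw [← natCast_zmod_val j, stdAddChar_natCast]
  rw [← exp_nat_mul]
  ring_nf

theorem gM_pow_apply {d : ℕ} [NeZero d] (ℓ : ℕ) (w : ZMod d → ℂ) (j : ZMod d) :
    (gM d ^ ℓ) w j = stdAddChar ((ℓ : ZMod d) * j) * w j := by
  induction ℓ generalizing w with
  | zero => simp
  | succ ℓ ih =>
    rw [pow_succ, LinearEquiv.mul_apply, ih, gM_apply]
    push_cast
    rw [add_mul, one_mul, AddChar.map_add_eq_mul]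
    ring

theorem inn_self_eq_sum_norm_sq {d : ℕ} [NeZero d] (v : ZMod d → ℂ) :
    inn v v = ((∑ j, ‖v j‖ ^ 2 : ℝ) : ℂ) := by
  push_cast
  exact sum_congr rfl fun j _ => by rw [mul_comm, mul_conj']

theorem inn_gM_pow_gT_pow_of_fourier {d : ℕ} [NeZero d] (f v : ZMod d → ℂ)
    (hv : ∀ j, v j = (d : ℂ)⁻¹ * ∑ t, f t * stdAddChar (j * t)) (k ℓ : ℕ) :
    inn v ((gM d ^ ℓ) ((gT d ^ k) v)) =
      (d : ℂ)⁻¹ * ∑ s, conj (f (s + (ℓ : ZMod d))) * f s * stdAddChar (-((k : ZMod d) * s)) := by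
  have hconj (j : ZMod d) : conj (v j) = (d : ℂ)⁻¹ * ∑ t, conj (f t) * stdAddChar (-(j * t)) := by
    simp [hv, map_sum, AddChar.map_neg_eq_conj]
  have hψ (j t s : ZMod d) : stdAddChar (-(j * t)) * stdAddChar ((ℓ : ZMod d) * j) *
      stdAddChar ((j - (k : ZMod d)) * s) =
        stdAddChar (-((k : ZMod d) * s)) * stdAddChar (j * (s + (ℓ : ZMod d) - t)) := by
    simp only [← AddChar.map_add_eq_mul]
    ring_nf
  calc inn v ((gM d ^ ℓ) ((gT d ^ k) v))
      = ∑ s, ∑ t, (d : ℂ)⁻¹ * (d : ℂ)⁻¹ * (conj (f t) * f s * stdAddChar (-((k : ZMod d) * s))) *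
          ∑ j, stdAddChar (j * (s + (ℓ : ZMod d) - t)) := by
        simp only [inn, gM_pow_apply, gT_pow_apply, hconj]
        simp only [hv, sum_mul, mul_sum]
        conv_lhs => rw [sum_comm]
        refine sum_congr rfl fun s _ => ?_
        conv_lhs => rw [sum_comm]
        refine sum_congr rfl fun t _ => sum_congr rfl fun j _ => ?_
        linear_combination ((d : ℂ)⁻¹ * (d : ℂ)⁻¹ * conj (f t) * f s) * hψ j t s
    _ = (d : ℂ)⁻¹ * ∑ s, conj (f (s + (ℓ : ZMod d))) * f s * stdAddChar (-((k : ZMod d) * s)) := by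
        rw [mul_sum]
        refine sum_congr rfl fun s _ => ?_
        simp only [AddChar.sum_mulShift _ (isPrimitive_stdAddChar d), ZMod.card, sub_eq_zero,
          Nat.cast_ite, Nat.cast_zero, mul_ite, mul_zero, sum_ite_eq, mem_univ, if_true]
        field_simp

theorem inn_gM_pow_gT_pow_of_fourier_addChar {d : ℕ} [NeZero d] (g : ZMod d → ZMod d)
    (v : ZMod d → ℂ) (hv : ∀ j, v j = (d : ℂ)⁻¹ * ∑ t, stdAddChar (g t + j * t)) (k ℓ : ℕ) :
    inn v ((gM d ^ ℓ) ((gT d ^ k) v)) =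
      (d : ℂ)⁻¹ * ∑ s, stdAddChar (g s - g (s + ℓ) - (k : ZMod d) * s) := by
  rw [inn_gM_pow_gT_pow_of_fourier (fun t => stdAddChar (g t)) v
    (by simpa only [AddChar.map_add_eq_mul] using hv)]
  congr 1
  refine sum_congr rfl fun s _ => ?_
  rw [← AddChar.map_neg_eq_conj, ← AddChar.map_add_eq_mul, ← AddChar.map_add_eq_mul]
  congr 1
  ring

theorem norm_sum_addChar_quadratic_sq {F : Type*} [Field F] [Fintype F] {ψ : AddChar F ℂ}
    (hψ : ψ.IsPrimitive) (h2 : (2 : F) ≠ 0) {a : F} (ha : a ≠ 0) (b c : F) :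
    ‖∑ x, ψ (a * x ^ 2 + b * x + c)‖ ^ 2 = Fintype.card F := by
  classical
  suffices h : ((‖∑ x, ψ (a * x ^ 2 + b * x + c)‖ ^ 2 : ℝ) : ℂ) = Fintype.card F by
    exact_mod_cast h
  calc ((‖∑ x, ψ (a * x ^ 2 + b * x + c)‖ ^ 2 : ℝ) : ℂ)
      = (∑ x, ψ (a * x ^ 2 + b * x + c)) * conj (∑ y, ψ (a * y ^ 2 + b * y + c)) := by
        push_cast
        exact (mul_conj' _).symm
    _ = ∑ y, ∑ u, ψ (y * (2 * a * u)) * ψ (a * u ^ 2 + b * u) := by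
        rw [map_sum, sum_mul_sum, sum_comm]
        refine sum_congr rfl fun y _ => ?_
        refine (Fintype.sum_equiv (Equiv.addLeft y) _ _ fun u => ?_).symm
        rw [← AddChar.map_neg_eq_conj, ← AddChar.map_add_eq_mul, ← AddChar.map_add_eq_mul]
        congr 1
        simp only [Equiv.coe_addLeft]
        ring
    _ = ∑ u, ψ (a * u ^ 2 + b * u) * ∑ y, ψ (y * (2 * a * u)) := by
        rw [sum_comm]
        simp only [mul_sum, mul_comm]
    _ = Fintype.card F := by
        simp [AddChar.sum_mulShift _ hψ, h2, ha]

theorem norm_sum_addChar_cube_sub_shift_sq {F : Type*} [Field F] [Fintype F] {ψ : AddChar F ℂ}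
    (hψ : ψ.IsPrimitive) (h2 : (2 : F) ≠ 0) (h3 : (3 : F) ≠ 0) {ℓ : F} (hℓ : ℓ ≠ 0) (k : F) :
    ‖∑ s, ψ (s ^ 3 - (s + ℓ) ^ 3 - k * s)‖ ^ 2 = Fintype.card F := by
  have hcubic (s : F) : s ^ 3 - (s + ℓ) ^ 3 - k * s =
      -3 * ℓ * s ^ 2 + (-(3 * ℓ ^ 2) - k) * s + -ℓ ^ 3 := by ring
  simp only [hcubic]
  exact norm_sum_addChar_quadratic_sq hψ h2 (mul_ne_zero (neg_ne_zero.2 h3) hℓ) _ _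

/-- the unitary DFT of the Alltop sequence,
`v j = p⁻¹ ∑_{t<p} exp(2 π i (t³ + j t) / p)`, is unit-norm and generates a
`(0, 1/p)`-biangular Gabor system (a Gabor MUB) for prime `p ≥ 5`. -/
theorem alltop_fourier_mub (p : ℕ) [Fact p.Prime] [NeZero p] (hp : 5 ≤ p)
    (v : ZMod p → ℂ)
    (hv : ∀ j : ZMod p, v j = (p : ℂ)⁻¹ *
      ∑ t ∈ Finset.range p,
        Complex.exp (2 * Real.pi * Complex.I * ((t : ℂ) ^ 3 + (j.val : ℂ) * t) / p)) :
    (∑ j, ‖v j‖ ^ 2 = 1) ∧ Biangular p v 0 (1 / p) := by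
  have hv' (j : ZMod p) : v j = (p : ℂ)⁻¹ * ∑ t, stdAddChar (t ^ 3 + j * t) := by
    rw [hv, sum_range_exp_cube_eq_sum_stdAddChar]
  have key := inn_gM_pow_gT_pow_of_fourier_addChar (fun t => t ^ 3) v hv'
  have hp0 : (p : ℂ) ≠ 0 := by exact_mod_cast NeZero.ne p
  have hne {m : ℕ} (h1 : 1 ≤ m) (h2 : m ≤ p - 1) : (m : ZMod p) ≠ 0 :=
    natCast_zmod_ne_zero (by omega) (by omega)
  refine ⟨?_, fun k hk1 hk2 => ?_, fun k ℓ _ hℓ1 hℓ2 => ?_⟩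
  · have h00 := key 0 0
    simp only [pow_zero, LinearEquiv.coe_one, id, inn_self_eq_sum_norm_sq] at h00
    simp only [Nat.cast_zero, add_zero, sub_self, zero_mul, AddChar.map_zero_eq_one, sum_const,
      card_univ, ZMod.card, nsmul_eq_mul, mul_one, inv_mul_cancel₀ hp0] at h00
    exact_mod_cast h00
  · have hsum : ∑ s : ZMod p, stdAddChar (-((k : ZMod p) * s)) = 0 := by
      simpa [mul_comm, hne hk1 hk2] using
        AddChar.sum_mulShift (-(k : ZMod p)) (isPrimitive_stdAddChar p)
    simpa [hsum] using key k 0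
  · have h2 : (2 : ZMod p) ≠ 0 := by exact_mod_cast hne (m := 2) (by omega) (by omega)
    have h3 : (3 : ZMod p) ≠ 0 := by exact_mod_cast hne (m := 3) (by omega) (by omega)
    rw [key, norm_mul, mul_pow, norm_sum_addChar_cube_sub_shift_sq (isPrimitive_stdAddChar p)
      h2 h3 (hne hℓ1 hℓ2), ZMod.card, norm_inv, Complex.norm_natCast]
    field_simp
end

section
/- For x, y ∈ ℝ, the vector v ∈ ℂ² with coordinates v(0) = 1 and v(1) = x + yi satisfies: G(v) is biangular if and only if x² + (y-1)² = 2 or x² + (y+1)² = 2. That is, the set C₂ = {v ∈ B₂ : v(0) = 1}, identified with points (x,y) ∈ ℝ², equals the union of the two circles of radius √2 centered at (0,1) and (0,-1). -/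
open scoped ComplexConjugate

/-!
In dimension two, `T` swaps the two coordinates and `M = diag(1, -1)`, so `G(v)` has only
three distinct inner products with `v`: one for `T`, and two for `M` and `MT` which must share
the constant `β`. For `v = (1, z)` these are `1 - |z|²` and `z - z̄ = 2 i Im z`, so
biangularity reads `|1 - x² - y²| = |2y|`, i.e. `1 - x² - y² = ∓2y`: the two circles.
-/

theorem gT_apply (d : ℕ) (v : ZMod d → ℂ) (j : ZMod d) : gT d v j = v (j - 1) := rfl

theorem gM_apply_s12 (d : ℕ) (v : ZMod d → ℂ) (j : ZMod d) :
    gM d v j = Complex.exp (2 * Real.pi * Complex.I / d) ^ j.val * v j := rfl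

theorem inn_two (u w : ZMod 2 → ℂ) : inn u w = conj (u 0) * w 0 + conj (u 1) * w 1 :=
  Fin.sum_univ_two _

theorem gM_two_apply_zero (w : ZMod 2 → ℂ) : gM 2 w 0 = w 0 := by
  rw [gM_apply_s12, ZMod.val_zero, pow_zero, one_mul]

theorem gM_two_apply_one (w : ZMod 2 → ℂ) : gM 2 w 1 = -w 1 := by
  have hω : Complex.exp (2 * Real.pi * Complex.I / (2 : ℕ)) = -1 := by
    rw [← Complex.exp_pi_mul_I]; congr 1; push_cast; ring
  rw [gM_apply_s12, hω, ZMod.val_one, pow_one, neg_one_mul]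

theorem biangular_two_iff (v : ZMod 2 → ℂ) (α β : ℝ) :
    Biangular 2 v α β ↔ ‖inn v (gT 2 v)‖ ^ 2 = α ∧ ‖inn v (gM 2 v)‖ ^ 2 = β ∧
      ‖inn v (gM 2 (gT 2 v))‖ ^ 2 = β := by
  constructor
  · rintro ⟨hT, hM⟩
    exact ⟨hT 1 le_rfl le_rfl, hM 0 1 zero_le_one le_rfl le_rfl, hM 1 1 le_rfl le_rfl le_rfl⟩
  · rintro ⟨hT, hM, hMT⟩
    refine ⟨fun k hk1 hk2 => ?_, fun k ℓ hk hℓ1 hℓ2 => ?_⟩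
    · obtain rfl : k = 1 := by omega
      simpa using hT
    · obtain rfl : ℓ = 1 := by omega
      interval_cases k
      · simpa using hM
      · simpa using hMT

theorem exists_biangular_two_iff (v : ZMod 2 → ℂ) :
    (∃ α β : ℝ, Biangular 2 v α β) ↔ ‖inn v (gM 2 v)‖ = ‖inn v (gM 2 (gT 2 v))‖ := by
  simp only [biangular_two_iff]
  constructor
  · rintro ⟨α, β, -, hM, hMT⟩
    exact (sq_eq_sq₀ (norm_nonneg _) (norm_nonneg _)).mp (hM.trans hMT.symm)
  · intro h
    exact ⟨_, _, rfl, rfl, by rw [h]⟩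

theorem norm_inn_gM_self_of_eq {v : ZMod 2 → ℂ} {z : ℂ} (hv0 : v 0 = 1) (hv1 : v 1 = z) :
    ‖inn v (gM 2 v)‖ = |1 - Complex.normSq z| := by
  have h : inn v (gM 2 v) = ((1 - Complex.normSq z : ℝ) : ℂ) := by
    rw [inn_two, gM_two_apply_zero, gM_two_apply_one, hv0, hv1, map_one, one_mul,
      mul_neg, ← Complex.normSq_eq_conj_mul_self]
    push_cast; ring
  rw [h, Complex.norm_real, Real.norm_eq_abs]

theorem norm_inn_gM_gT_of_eq {v : ZMod 2 → ℂ} {z : ℂ} (hv0 : v 0 = 1) (hv1 : v 1 = z) :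
    ‖inn v (gM 2 (gT 2 v))‖ = |2 * z.im| := by
  have h : inn v (gM 2 (gT 2 v)) = z - conj z := by
    have h01 : (0 : ZMod 2) - 1 = 1 := rfl
    have h11 : (1 : ZMod 2) - 1 = 0 := rfl
    rw [inn_two, gM_two_apply_zero, gM_two_apply_one, gT_apply, gT_apply, h01, h11, hv0, hv1]
    simp only [map_one, one_mul, mul_neg, mul_one, sub_eq_add_neg]
  rw [h, Complex.sub_conj, norm_mul, Complex.norm_I, mul_one, Complex.norm_real,
    Real.norm_eq_abs]

theorem two_circles_iff (x y : ℝ) :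
    |1 - (x ^ 2 + y ^ 2)| = |2 * y| ↔ x ^ 2 + (y - 1) ^ 2 = 2 ∨ x ^ 2 + (y + 1) ^ 2 = 2 := by
  rw [abs_eq_abs, or_comm]
  apply or_congr <;> constructor <;> intro h <;> linarith

/-- for `v = (1, x + y i) ∈ ℂ²`, the Gabor system `G(v)` is biangular
iff `(x, y)` lies on one of the two circles of radius `√2` centered at `(0, ±1)`. -/
theorem cset_two_circles (x y : ℝ) (v : ZMod 2 → ℂ)
    (hv0 : v 0 = 1) (hv1 : v 1 = (x : ℂ) + (y : ℂ) * Complex.I) :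
    (∃ α β : ℝ, Biangular 2 v α β) ↔
      (x ^ 2 + (y - 1) ^ 2 = 2 ∨ x ^ 2 + (y + 1) ^ 2 = 2) := by
  have him : ((x : ℂ) + (y : ℂ) * Complex.I).im = y := by simp
  rw [exists_biangular_two_iff, norm_inn_gM_self_of_eq hv0 hv1, norm_inn_gM_gT_of_eq hv0 hv1,
    Complex.normSq_add_mul_I, him, two_circles_iff]
end
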